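/- Let M1 and M2 be matroids on disjoint finite ground sets S1 and S2, let p1 ∈ S1 and p2 ∈ S2 be elements that are not loops, and let p be an element not in S1 ∪ S2. Set E = (S1 \ {p1}) ∪ (S2 \ {p2}) ∪ {p}. Define C_P to be the collection of subsets of E consisting of: all circuits of M1 not containing p1, all circuits of M2 not containing p2, all sets (C1 \ {p1}) ∪ {p} where C1 is a circuit of M1 containing p1, all sets (C2 \ {p2}) ∪ {p} where C2 is a circuit of M2 containing p2, and all sets (C1 \ {p1}) ∪ (C2 \ {p2}) where C1 is a circuit of M1 containing p1 and C2 is a circuit of M2 containing p2. Then there exists a matroid on E whose circuits are exactly the members of C_P (the parallel connection of M1 and M2). -/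

import Mathlib

/-!
For an independent set `I` of the parallel connection, the rank sum
`r₁(I ∩ E₁ + p₁) + r₂(I ∩ E₂ + p₂)` exceeds `|I|` by one or two. To augment `I` from a larger
independent `J`: if one of the two ranks is larger for `J`, any element of `J` outside the
corresponding closure can be added to `I`; otherwise the rank sum of `I` exceeds `|I|` by two,
which forces `p ∉ I` with both `p₁` and `p₂` addable, and then `p` itself or an augmenting
element of one side can be added. The circuits are the minimal sets violating the independence
description, and these are exactly the five listed families.
-/

/-- A circuit of a matroid: a minimal dependent set. -/
def Matroid.Circuit' {α : Type*} (M : Matroid α) (C : Set α) : Prop :=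
  M.Dep C ∧ ∀ D : Set α, D ⊂ C → ¬ M.Dep D

open Set

lemma Set.union_inter_eq_left_of_disjoint {α : Type*} {s t u : Set α} (hs : s ⊆ u)
    (ht : Disjoint t u) : (s ∪ t) ∩ u = s := by
  rw [union_inter_distrib_right, inter_eq_left.2 hs, ht.inter_eq, union_empty]

namespace Matroid

variable {α : Type*} {M : Matroid α} {A C I X Y : Set α} {e q x : α}

lemma circuit'_iff_isCircuit : M.Circuit' C ↔ M.IsCircuit C := by
  rw [IsCircuit, minimal_iff_forall_ssubset]
  rfl

lemma exists_mem_notMem_closure_of_eRk_lt (h : M.eRk X < M.eRk Y) :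
    ∃ e ∈ Y ∩ M.E, e ∉ M.closure X := by
  by_contra! hY
  refine h.not_ge ?_
  calc M.eRk Y = M.eRk (Y ∩ M.E) := (M.eRk_inter_ground Y).symm
    _ ≤ M.eRk (M.closure X) := M.eRk_mono hY
    _ = M.eRk X := M.eRk_closure_eq X

lemma Indep.exists_isCircuit_of_not_indep_insert (hI : M.Indep I) (he : e ∈ M.E)
    (hIe : ¬ M.Indep (insert e I)) : ∃ C, M.IsCircuit C ∧ e ∈ C ∧ C \ {e} ⊆ I := by
  obtain ⟨C, hCI, hC⟩ := Dep.exists_isCircuit_subset ⟨hIe, insert_subset he hI.subset_ground⟩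
  have heC : e ∈ C := by_contra fun heC ↦
    hC.not_indep (hI.subset ((subset_insert_iff_of_notMem heC).1 hCI))
  exact ⟨C, hC, heC, sdiff_singleton_subset_iff.2 hCI⟩

lemma Dep.eRk_insert_le_encard (h : M.Dep (insert e I)) (hI : I.Finite) :
    M.eRk (insert e I) ≤ I.encard :=
  (ENat.lt_add_one_iff hI.encard_lt_top.ne).1 <|
    (M.eRk_lt_encard_of_dep_of_finite (hI.insert e) h).trans_le (encard_insert_le _ _)

lemma IsCircuit.indep_insert_of_subset_diff (hC : M.IsCircuit C) (hq : q ∈ C) (hA : A ⊆ C \ {q})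
    (hx : x ∈ C \ {q}) (hxA : x ∉ A) : M.Indep (insert q A) :=
  (hC.sdiff_singleton_indep hx.1).subset <|
    insert_subset ⟨hq, fun h ↦ hx.2 h.symm⟩ fun _ hy ↦ ⟨(hA hy).1, fun h ↦ hxA (h ▸ hy)⟩

end Matroid

namespace ParallelConnection

variable {α : Type*} {M1 M2 : Matroid α} {p1 p2 p e : α} {C C1 C2 I J X : Set α}

def ground (M1 M2 : Matroid α) (p1 p2 p : α) : Set α :=
  (M1.E \ {p1}) ∪ (M2.E \ {p2}) ∪ {p}

structure Admissible (M1 M2 : Matroid α) (p1 p2 p : α) : Prop where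
  disjoint : Disjoint M1.E M2.E
  indep_left : M1.Indep {p1}
  indep_right : M2.Indep {p2}
  notMem_left : p ∉ M1.E
  notMem_right : p ∉ M2.E

/-- `p` plays the role of `p1` in `M1` and of `p2` in `M2`; a set avoiding `p` must leave room
for at least one of `p1`, `p2`. -/
structure Indep (M1 M2 : Matroid α) (p1 p2 p : α) (I : Set α) : Prop where
  subset_ground : I ⊆ ground M1 M2 p1 p2 p
  indep_left : M1.Indep (I ∩ M1.E)
  indep_right : M2.Indep (I ∩ M2.E)
  full_of_mem : p ∈ I → M1.Indep (insert p1 (I ∩ M1.E)) ∧ M2.Indep (insert p2 (I ∩ M2.E))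
  full_of_notMem : p ∉ I → M1.Indep (insert p1 (I ∩ M1.E)) ∨ M2.Indep (insert p2 (I ∩ M2.E))

def IsCircuit (M1 M2 : Matroid α) (p1 p2 p : α) (C : Set α) : Prop :=
  (M1.IsCircuit C ∧ p1 ∉ C) ∨ (M2.IsCircuit C ∧ p2 ∉ C) ∨
    (∃ C1, M1.IsCircuit C1 ∧ p1 ∈ C1 ∧ C = (C1 \ {p1}) ∪ {p}) ∨
    (∃ C2, M2.IsCircuit C2 ∧ p2 ∈ C2 ∧ C = (C2 \ {p2}) ∪ {p}) ∨
    ∃ C1 C2, M1.IsCircuit C1 ∧ p1 ∈ C1 ∧ M2.IsCircuit C2 ∧ p2 ∈ C2 ∧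
      C = (C1 \ {p1}) ∪ (C2 \ {p2})

lemma ground_comm (M1 M2 : Matroid α) (p1 p2 p : α) :
    ground M1 M2 p1 p2 p = ground M2 M1 p2 p1 p := by
  rw [ground, ground, union_comm (M1.E \ {p1})]

lemma Admissible.symm (h : Admissible M1 M2 p1 p2 p) : Admissible M2 M1 p2 p1 p :=
  ⟨h.disjoint.symm, h.indep_right, h.indep_left, h.notMem_right, h.notMem_left⟩

lemma Indep.symm (hI : Indep M1 M2 p1 p2 p I) : Indep M2 M1 p2 p1 p I :=
  ⟨ground_comm M1 M2 p1 p2 p ▸ hI.subset_ground, hI.indep_right, hI.indep_left,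
    fun hp ↦ (hI.full_of_mem hp).symm, fun hp ↦ (hI.full_of_notMem hp).symm⟩

section Admissible

variable (h : Admissible M1 M2 p1 p2 p)
include h

lemma Admissible.mem_left : p1 ∈ M1.E :=
  singleton_subset_iff.1 h.indep_left.subset_ground

lemma Admissible.notMem_of_subset_ground (hX : X ⊆ ground M1 M2 p1 p2 p) : p1 ∉ X := fun hp1 ↦ by
  rcases hX hp1 with (hp1 | hp1) | hp1
  · exact hp1.2 rfl
  · exact h.disjoint.notMem_of_mem_left h.mem_left hp1.1
  · exact h.notMem_left (hp1 ▸ h.mem_left)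

lemma Admissible.encard_eq (hX : X ⊆ ground M1 M2 p1 p2 p) :
    X.encard = (X ∩ M1.E).encard + (X ∩ M2.E).encard + (X ∩ {p}).encard := by
  have hXE : X ⊆ M1.E ∪ M2.E ∪ {p} :=
    hX.trans (union_subset_union_left _ (union_subset_union sdiff_subset sdiff_subset))
  conv_lhs => rw [← inter_eq_left.2 hXE, inter_union_distrib_left, inter_union_distrib_left]
  rw [encard_union_eq, encard_union_eq]
  · exact h.disjoint.mono inter_subset_right inter_subset_right
  · refine disjoint_union_left.2 ⟨?_, ?_⟩ <;>
      refine Disjoint.mono inter_subset_right inter_subset_right ?_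
    · exact disjoint_singleton_right.2 h.notMem_left
    · exact disjoint_singleton_right.2 h.notMem_right

lemma indep_empty : Indep M1 M2 p1 p2 p ∅ :=
  ⟨empty_subset _, by simp, by simp, fun hp ↦ hp.elim,
    fun _ ↦ Or.inl (by simpa using h.indep_left)⟩

end Admissible

lemma Indep.subset (hJ : Indep M1 M2 p1 p2 p J) (hIJ : I ⊆ J) : Indep M1 M2 p1 p2 p I := by
  have h1 : I ∩ M1.E ⊆ J ∩ M1.E := inter_subset_inter_left _ hIJ
  have h2 : I ∩ M2.E ⊆ J ∩ M2.E := inter_subset_inter_left _ hIJ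
  refine ⟨hIJ.trans hJ.subset_ground, hJ.indep_left.subset h1, hJ.indep_right.subset h2,
    fun hp ↦ (hJ.full_of_mem (hIJ hp)).imp (·.subset (insert_subset_insert h1))
      (·.subset (insert_subset_insert h2)), fun hp ↦ ?_⟩
  by_cases hpJ : p ∈ J
  · exact Or.inl ((hJ.full_of_mem hpJ).1.subset (insert_subset_insert h1))
  · exact (hJ.full_of_notMem hpJ).imp (·.subset (insert_subset_insert h1))
      (·.subset (insert_subset_insert h2))

section Augmentation

variable (h : Admissible M1 M2 p1 p2 p)
include h

lemma Indep.insert_of_notMem_closure (hI : Indep M1 M2 p1 p2 p I) (he : e ∈ M1.E)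
    (hep1 : e ≠ p1) (hecl : e ∉ M1.closure (insert p1 (I ∩ M1.E))) :
    Indep M1 M2 p1 p2 p (insert e I) := by
  have hleft : insert e I ∩ M1.E = insert e (I ∩ M1.E) := insert_inter_of_mem he
  have hright : insert e I ∩ M2.E = I ∩ M2.E :=
    insert_inter_of_notMem (h.disjoint.notMem_of_mem_left he)
  have hpe : p ≠ e := fun hpe ↦ h.notMem_left (hpe ▸ he)
  have hsub : insert p1 (I ∩ M1.E) ⊆ M1.closure (insert p1 (I ∩ M1.E)) :=
    M1.subset_closure _ (insert_subset h.mem_left inter_subset_right)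
  have hfull (hF : M1.Indep (insert p1 (I ∩ M1.E))) :
      M1.Indep (insert p1 (insert e I ∩ M1.E)) := by
    rw [hleft, insert_comm]
    exact (hF.insert_indep_iff_of_notMem fun h' ↦ hecl (hsub h')).2 ⟨he, hecl⟩
  refine ⟨insert_subset (Or.inl (Or.inl ⟨he, hep1⟩)) hI.subset_ground, ?_, ?_, fun hp ↦ ?_,
    fun hp ↦ ?_⟩
  · rw [hleft, hI.indep_left.insert_indep_iff_of_notMem fun h' ↦ hecl (hsub (.inr h'))]
    exact ⟨he, fun h' ↦ hecl (M1.closure_subset_closure (subset_insert _ _) h')⟩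
  · rw [hright]
    exact hI.indep_right
  · rw [hright]
    exact (hI.full_of_mem ((mem_insert_iff.1 hp).resolve_left hpe)).imp_left hfull
  · rw [hright]
    exact (hI.full_of_notMem fun hpI ↦ hp (.inr hpI)).imp_left hfull

lemma Indep.exists_insert_of_eRk_lt (hI : Indep M1 M2 p1 p2 p I)
    (hlt : M1.eRk (insert p1 (I ∩ M1.E)) < M1.eRk (insert p1 (J ∩ M1.E))) :
    ∃ e ∈ J \ I, Indep M1 M2 p1 p2 p (insert e I) := by
  obtain ⟨e, ⟨heJ, heE⟩, hecl⟩ := M1.exists_mem_notMem_closure_of_eRk_lt hlt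
  have hep1 : e ≠ p1 := by
    rintro rfl
    exact hecl (M1.mem_closure_of_mem' (mem_insert _ _))
  refine ⟨e, ⟨((mem_insert_iff.1 heJ).resolve_left hep1).1, fun heI ↦ hecl ?_⟩,
    hI.insert_of_notMem_closure h heE hep1 hecl⟩
  exact M1.mem_closure_of_mem' (.inr ⟨heI, heE⟩)

lemma Indep.insert_of_full_right (hI : Indep M1 M2 p1 p2 p I) (hpI : p ∉ I)
    (hF2 : M2.Indep (insert p2 (I ∩ M2.E))) (he : e ∈ M1.E) (hep1 : e ≠ p1)
    (hie : M1.Indep (insert e (I ∩ M1.E))) : Indep M1 M2 p1 p2 p (insert e I) := by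
  have hright : insert e I ∩ M2.E = I ∩ M2.E :=
    insert_inter_of_notMem (h.disjoint.notMem_of_mem_left he)
  have hpe : p ≠ e := fun hpe ↦ h.notMem_left (hpe ▸ he)
  refine ⟨insert_subset (Or.inl (Or.inl ⟨he, hep1⟩)) hI.subset_ground,
    by rwa [insert_inter_of_mem he], hright ▸ hI.indep_right,
    fun hp ↦ absurd ((mem_insert_iff.1 hp).resolve_left hpe) hpI, fun _ ↦ .inr (hright ▸ hF2)⟩

lemma Indep.exists_insert_of_encard_inter_lt (hI : Indep M1 M2 p1 p2 p I)
    (hJ : Indep M1 M2 p1 p2 p J) (hpI : p ∉ I) (hF2 : M2.Indep (insert p2 (I ∩ M2.E)))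
    (hlt : (I ∩ M1.E).encard < (J ∩ M1.E).encard) :
    ∃ e ∈ J \ I, Indep M1 M2 p1 p2 p (insert e I) := by
  obtain ⟨e, ⟨⟨heJ, heE⟩, heI⟩, hie⟩ := hI.indep_left.augment hJ.indep_left hlt
  have hep1 : e ≠ p1 := by
    rintro rfl
    exact h.notMem_of_subset_ground hJ.subset_ground heJ
  exact ⟨e, ⟨heJ, fun h' ↦ heI ⟨h', heE⟩⟩, hI.insert_of_full_right h hpI hF2 heE hep1 hie⟩

lemma Indep.insert_basepoint (hI : Indep M1 M2 p1 p2 p I)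
    (hF1 : M1.Indep (insert p1 (I ∩ M1.E))) (hF2 : M2.Indep (insert p2 (I ∩ M2.E))) :
    Indep M1 M2 p1 p2 p (insert p I) := by
  have h1 : insert p I ∩ M1.E = I ∩ M1.E := insert_inter_of_notMem h.notMem_left
  have h2 : insert p I ∩ M2.E = I ∩ M2.E := insert_inter_of_notMem h.notMem_right
  exact ⟨insert_subset (.inr rfl) hI.subset_ground, h1 ▸ hI.indep_left, h2 ▸ hI.indep_right,
    fun _ ↦ ⟨h1 ▸ hF1, h2 ▸ hF2⟩, fun hp ↦ absurd (mem_insert _ _) hp⟩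

lemma Indep.encard_add_one_le (hX : Indep M1 M2 p1 p2 p X) :
    X.encard + 1 ≤ M1.eRk (insert p1 (X ∩ M1.E)) + M2.eRk (insert p2 (X ∩ M2.E)) := by
  have hp1X : p1 ∉ X ∩ M1.E := fun hp1 ↦ h.notMem_of_subset_ground hX.subset_ground hp1.1
  have hp2X : p2 ∉ X ∩ M2.E := fun hp2 ↦
    h.symm.notMem_of_subset_ground hX.symm.subset_ground hp2.1
  have le1 := hX.indep_left.encard_le_eRk_of_subset (subset_insert p1 _)
  have le2 := hX.indep_right.encard_le_eRk_of_subset (subset_insert p2 _)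
  rw [h.encard_eq hX.subset_ground]
  by_cases hpX : p ∈ X
  · obtain ⟨hF1, hF2⟩ := hX.full_of_mem hpX
    rw [inter_eq_right.2 (singleton_subset_iff.2 hpX), encard_singleton, hF1.eRk_eq_encard,
      hF2.eRk_eq_encard, encard_insert_of_notMem hp1X, encard_insert_of_notMem hp2X]
    exact le_of_eq (by ring)
  · rw [inter_singleton_eq_empty.2 hpX, encard_empty, add_zero]
    rcases hX.full_of_notMem hpX with hF1 | hF2
    · rw [hF1.eRk_eq_encard, encard_insert_of_notMem hp1X, add_right_comm]
      gcongr
    · rw [hF2.eRk_eq_encard, encard_insert_of_notMem hp2X, add_assoc]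
      gcongr

lemma Indep.full_of_encard_add_two_le (hX : Indep M1 M2 p1 p2 p X) (hfin : X.Finite)
    (hle : X.encard + 2 ≤ M1.eRk (insert p1 (X ∩ M1.E)) + M2.eRk (insert p2 (X ∩ M2.E))) :
    p ∉ X ∧ M1.Indep (insert p1 (X ∩ M1.E)) ∧ M2.Indep (insert p2 (X ∩ M2.E)) := by
  have hfin1 := hfin.inter_of_left M1.E
  have hfin2 := hfin.inter_of_left M2.E
  have le1 : M1.eRk (insert p1 (X ∩ M1.E)) ≤ (X ∩ M1.E).encard + 1 :=
    hX.indep_left.eRk_eq_encard ▸ M1.eRk_insert_le_add_one p1 _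
  have le2 : M2.eRk (insert p2 (X ∩ M2.E)) ≤ (X ∩ M2.E).encard + 1 :=
    hX.indep_right.eRk_eq_encard ▸ M2.eRk_insert_le_add_one p2 _
  have dep1 (hF1 : ¬ M1.Indep (insert p1 (X ∩ M1.E))) :
      M1.eRk (insert p1 (X ∩ M1.E)) ≤ (X ∩ M1.E).encard :=
    Matroid.Dep.eRk_insert_le_encard ⟨hF1, insert_subset h.mem_left inter_subset_right⟩ hfin1
  have dep2 (hF2 : ¬ M2.Indep (insert p2 (X ∩ M2.E))) :
      M2.eRk (insert p2 (X ∩ M2.E)) ≤ (X ∩ M2.E).encard :=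
    Matroid.Dep.eRk_insert_le_encard ⟨hF2, insert_subset h.symm.mem_left inter_subset_right⟩ hfin2
  rw [h.encard_eq hX.subset_ground, ← hfin1.cast_ncard_eq, ← hfin2.cast_ncard_eq,
    ← (hfin.inter_of_left {p}).cast_ncard_eq] at hle
  rw [← hfin1.cast_ncard_eq] at le1 dep1
  rw [← hfin2.cast_ncard_eq] at le2 dep2
  refine ⟨fun hpX ↦ ?_, by_contra fun hF1 ↦ ?_, by_contra fun hF2 ↦ ?_⟩
  · have := hle.trans (add_le_add le1 le2)
    rw [inter_eq_right.2 (singleton_subset_iff.2 hpX), ncard_singleton] at this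
    norm_cast at this
    omega
  · have := hle.trans (add_le_add (dep1 hF1) le2)
    norm_cast at this
    omega
  · have := hle.trans (add_le_add le1 (dep2 hF2))
    norm_cast at this
    omega

lemma Indep.exists_insert_of_encard_lt (hI : Indep M1 M2 p1 p2 p I) (hJ : Indep M1 M2 p1 p2 p J)
    (hIfin : I.Finite) (hlt : I.encard < J.encard) :
    ∃ e ∈ J \ I, Indep M1 M2 p1 p2 p (insert e I) := by
  by_cases hlt1 : M1.eRk (insert p1 (I ∩ M1.E)) < M1.eRk (insert p1 (J ∩ M1.E))
  · exact hI.exists_insert_of_eRk_lt h hlt1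
  by_cases hlt2 : M2.eRk (insert p2 (I ∩ M2.E)) < M2.eRk (insert p2 (J ∩ M2.E))
  · exact (hI.symm.exists_insert_of_eRk_lt h.symm hlt2).imp fun _ ↦ .imp_right Indep.symm
  obtain ⟨hpI, hF1, hF2⟩ := hI.full_of_encard_add_two_le h hIfin <| calc
    I.encard + 2 = I.encard + 1 + 1 := by rw [add_assoc, one_add_one_eq_two]
    _ ≤ J.encard + 1 := by gcongr; exact Order.add_one_le_of_lt hlt
    _ ≤ M1.eRk (insert p1 (J ∩ M1.E)) + M2.eRk (insert p2 (J ∩ M2.E)) := hJ.encard_add_one_le h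
    _ ≤ M1.eRk (insert p1 (I ∩ M1.E)) + M2.eRk (insert p2 (I ∩ M2.E)) :=
      add_le_add (not_lt.1 hlt1) (not_lt.1 hlt2)
  by_cases hpJ : p ∈ J
  · exact ⟨p, ⟨hpJ, hpI⟩, hI.insert_basepoint h hF1 hF2⟩
  have : (I ∩ M1.E).encard < (J ∩ M1.E).encard ∨ (I ∩ M2.E).encard < (J ∩ M2.E).encard := by
    by_contra! hle
    rw [h.encard_eq hI.subset_ground, h.encard_eq hJ.subset_ground,
      inter_singleton_eq_empty.2 hpI, inter_singleton_eq_empty.2 hpJ] at hlt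
    exact hlt.not_ge (add_le_add (add_le_add hle.1 hle.2) le_rfl)
  rcases this with hlt' | hlt'
  · exact hI.exists_insert_of_encard_inter_lt h hJ hpI hF2 hlt'
  · exact (hI.symm.exists_insert_of_encard_inter_lt h.symm hJ.symm hpI hF1 hlt').imp
      fun _ ↦ .imp_right Indep.symm

end Augmentation

lemma not_indep_of_isCircuit_left (hC : M1.IsCircuit C) : ¬ Indep M1 M2 p1 p2 p C := fun hI ↦
  hC.not_indep (inter_eq_left.2 hC.subset_ground ▸ hI.indep_left)

lemma IsCircuit.subset_ground (hC : IsCircuit M1 M2 p1 p2 p C) : C ⊆ ground M1 M2 p1 p2 p := by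
  have h1 {C1} (hC1 : M1.IsCircuit C1) : C1 \ {p1} ⊆ ground M1 M2 p1 p2 p :=
    (sdiff_subset_sdiff_left hC1.subset_ground).trans (subset_union_left.trans subset_union_left)
  have h2 {C2} (hC2 : M2.IsCircuit C2) : C2 \ {p2} ⊆ ground M1 M2 p1 p2 p :=
    (sdiff_subset_sdiff_left hC2.subset_ground).trans (subset_union_right.trans subset_union_left)
  have hp : {p} ⊆ ground M1 M2 p1 p2 p := subset_union_right
  rcases hC with ⟨hC, hp1⟩ | ⟨hC, hp2⟩ | ⟨C1, hC1, -, rfl⟩ | ⟨C2, hC2, -, rfl⟩ |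
    ⟨C1, C2, hC1, -, hC2, -, rfl⟩
  · exact sdiff_singleton_eq_self hp1 ▸ h1 hC
  · exact sdiff_singleton_eq_self hp2 ▸ h2 hC
  · exact union_subset (h1 hC1) hp
  · exact union_subset (h2 hC2) hp
  · exact union_subset (h1 hC1) (h2 hC2)

section Circuits

variable (h : Admissible M1 M2 p1 p2 p)
include h

lemma not_indep_diff_union_basepoint (hC : M1.IsCircuit C) (hp1C : p1 ∈ C) :
    ¬ Indep M1 M2 p1 p2 p ((C \ {p1}) ∪ {p}) := fun hI ↦ by
  have hF := (hI.full_of_mem (.inr rfl)).1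
  rw [union_inter_eq_left_of_disjoint (sdiff_subset.trans hC.subset_ground)
    (disjoint_singleton_left.2 h.notMem_left), insert_sdiff_self_of_mem hp1C] at hF
  exact hC.not_indep hF

lemma not_indep_diff_union_diff (hC1 : M1.IsCircuit C1) (hp1 : p1 ∈ C1) (hC2 : M2.IsCircuit C2)
    (hp2 : p2 ∈ C2) : ¬ Indep M1 M2 p1 p2 p ((C1 \ {p1}) ∪ (C2 \ {p2})) := fun hI ↦ by
  have hC1E : C1 \ {p1} ⊆ M1.E := sdiff_subset.trans hC1.subset_ground
  have hC2E : C2 \ {p2} ⊆ M2.E := sdiff_subset.trans hC2.subset_ground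
  have hpC : p ∉ (C1 \ {p1}) ∪ (C2 \ {p2}) := by
    rintro (hp | hp)
    · exact h.notMem_left (hC1E hp)
    · exact h.notMem_right (hC2E hp)
  rcases hI.full_of_notMem hpC with hF | hF
  · rw [union_inter_eq_left_of_disjoint hC1E (h.disjoint.symm.mono_left hC2E),
      insert_sdiff_self_of_mem hp1] at hF
    exact hC1.not_indep hF
  · rw [union_comm, union_inter_eq_left_of_disjoint hC2E (h.disjoint.mono_left hC1E),
      insert_sdiff_self_of_mem hp2] at hF
    exact hC2.not_indep hF

lemma IsCircuit.not_indep (hC : IsCircuit M1 M2 p1 p2 p C) : ¬ Indep M1 M2 p1 p2 p C := by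
  rcases hC with ⟨hC, -⟩ | ⟨hC, -⟩ | ⟨C1, hC1, hp1, rfl⟩ | ⟨C2, hC2, hp2, rfl⟩ |
    ⟨C1, C2, hC1, hp1, hC2, hp2, rfl⟩
  · exact not_indep_of_isCircuit_left hC
  · exact fun hI ↦ not_indep_of_isCircuit_left hC hI.symm
  · exact not_indep_diff_union_basepoint h hC1 hp1
  · exact fun hI ↦ not_indep_diff_union_basepoint h.symm hC2 hp2 hI.symm
  · exact not_indep_diff_union_diff h hC1 hp1 hC2 hp2

lemma indep_of_subset_left (hI : I ⊆ (M1.E \ {p1}) ∪ {p}) (hI1 : M1.Indep (I ∩ M1.E))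
    (hpI : p ∈ I → M1.Indep (insert p1 (I ∩ M1.E))) : Indep M1 M2 p1 p2 p I := by
  have hI2 : I ∩ M2.E = ∅ := by
    refine eq_empty_of_forall_notMem fun x ⟨hxI, hx2⟩ ↦ ?_
    rcases hI hxI with hx | (rfl : x = p)
    · exact h.disjoint.notMem_of_mem_left hx.1 hx2
    · exact h.notMem_right hx2
  have hF2 : M2.Indep (insert p2 (I ∩ M2.E)) := by
    rw [hI2, insert_empty_eq]
    exact h.indep_right
  exact ⟨hI.trans (union_subset_union_left _ subset_union_left), hI1, hI2 ▸ M2.empty_indep,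
    fun hp ↦ ⟨hpI hp, hF2⟩, fun _ ↦ .inr hF2⟩

lemma indep_of_ssubset_isCircuit_left (hC : M1.IsCircuit C) (hp1C : p1 ∉ C) (hIC : I ⊂ C) :
    Indep M1 M2 p1 p2 p I :=
  indep_of_subset_left h
    (fun x hx ↦ .inl ⟨hC.subset_ground (hIC.subset hx),
      fun (hx1 : x = p1) ↦ hp1C (hx1 ▸ hIC.subset hx)⟩)
    ((hC.ssubset_indep hIC).subset inter_subset_left)
    fun hp ↦ absurd (hC.subset_ground (hIC.subset hp)) h.notMem_left

lemma indep_of_ssubset_diff_union_basepoint (hC : M1.IsCircuit C) (hp1C : p1 ∈ C)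
    (hIC : I ⊂ (C \ {p1}) ∪ {p}) : Indep M1 M2 p1 p2 p I := by
  have hI1 : I ∩ M1.E ⊆ C \ {p1} := fun x ⟨hxI, hx1⟩ ↦
    (hIC.subset hxI).resolve_right fun (hxp : x = p) ↦ h.notMem_left (hxp ▸ hx1)
  refine indep_of_subset_left h
    (hIC.subset.trans (union_subset_union_left _ (sdiff_subset_sdiff_left hC.subset_ground)))
    ((hC.sdiff_singleton_indep hp1C).subset hI1) fun hpI ↦ ?_
  obtain ⟨x, hxC, hxI⟩ := exists_of_ssubset hIC
  have hx : x ∈ C \ {p1} := hxC.resolve_right fun (hxp : x = p) ↦ hxI (hxp ▸ hpI)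
  exact hC.indep_insert_of_subset_diff hp1C hI1 hx fun hx' ↦ hxI hx'.1

lemma indep_of_ssubset_diff_union_diff (hC1 : M1.IsCircuit C1) (hp1 : p1 ∈ C1)
    (hC2 : M2.IsCircuit C2) (hp2 : p2 ∈ C2) (hIC : I ⊂ (C1 \ {p1}) ∪ (C2 \ {p2})) :
    Indep M1 M2 p1 p2 p I := by
  have hI1 : I ∩ M1.E ⊆ C1 \ {p1} := fun x ⟨hxI, hx1⟩ ↦ (hIC.subset hxI).resolve_right
    fun hx2 ↦ h.disjoint.notMem_of_mem_left hx1 (hC2.subset_ground hx2.1)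
  have hI2 : I ∩ M2.E ⊆ C2 \ {p2} := fun x ⟨hxI, hx2⟩ ↦ (hIC.subset hxI).resolve_left
    fun hx1 ↦ h.disjoint.notMem_of_mem_left (hC1.subset_ground hx1.1) hx2
  have hground : (C1 \ {p1}) ∪ (C2 \ {p2}) ⊆ ground M1 M2 p1 p2 p :=
    IsCircuit.subset_ground (.inr (.inr (.inr (.inr ⟨C1, C2, hC1, hp1, hC2, hp2, rfl⟩))))
  obtain ⟨x, hxC, hxI⟩ := exists_of_ssubset hIC
  refine ⟨hIC.subset.trans hground, (hC1.sdiff_singleton_indep hp1).subset hI1,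
    (hC2.sdiff_singleton_indep hp2).subset hI2, fun hpI ↦ ?_, fun _ ↦ ?_⟩
  · rcases hIC.subset hpI with hp | hp
    · exact absurd (hC1.subset_ground hp.1) h.notMem_left
    · exact absurd (hC2.subset_ground hp.1) h.notMem_right
  · rcases hxC with hx | hx
    · exact .inl (hC1.indep_insert_of_subset_diff hp1 hI1 hx fun hx' ↦ hxI hx'.1)
    · exact .inr (hC2.indep_insert_of_subset_diff hp2 hI2 hx fun hx' ↦ hxI hx'.1)

lemma IsCircuit.indep_of_ssubset (hC : IsCircuit M1 M2 p1 p2 p C) (hIC : I ⊂ C) :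
    Indep M1 M2 p1 p2 p I := by
  rcases hC with ⟨hC, hp1⟩ | ⟨hC, hp2⟩ | ⟨C1, hC1, hp1, rfl⟩ | ⟨C2, hC2, hp2, rfl⟩ |
    ⟨C1, C2, hC1, hp1, hC2, hp2, rfl⟩
  · exact indep_of_ssubset_isCircuit_left h hC hp1 hIC
  · exact (indep_of_ssubset_isCircuit_left h.symm hC hp2 hIC).symm
  · exact indep_of_ssubset_diff_union_basepoint h hC1 hp1 hIC
  · exact (indep_of_ssubset_diff_union_basepoint h.symm hC2 hp2 hIC).symm
  · exact indep_of_ssubset_diff_union_diff h hC1 hp1 hC2 hp2 hIC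

lemma exists_isCircuit_subset_of_not_indep_inter (hX : X ⊆ ground M1 M2 p1 p2 p)
    (hX1 : ¬ M1.Indep (X ∩ M1.E)) : ∃ C ⊆ X, M1.IsCircuit C ∧ p1 ∉ C := by
  obtain ⟨C, hCX, hC⟩ := Matroid.Dep.exists_isCircuit_subset ⟨hX1, inter_subset_right⟩
  exact ⟨C, hCX.trans inter_subset_left, hC,
    fun hp1 ↦ h.notMem_of_subset_ground hX (hCX hp1).1⟩

lemma exists_isCircuit_subset (hX : X ⊆ ground M1 M2 p1 p2 p) (hXi : ¬ Indep M1 M2 p1 p2 p X) :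
    ∃ C ⊆ X, IsCircuit M1 M2 p1 p2 p C := by
  by_cases hX1 : M1.Indep (X ∩ M1.E)
  swap
  · obtain ⟨C, hCX, hC⟩ := exists_isCircuit_subset_of_not_indep_inter h hX hX1
    exact ⟨C, hCX, .inl hC⟩
  by_cases hX2 : M2.Indep (X ∩ M2.E)
  swap
  · obtain ⟨C, hCX, hC⟩ :=
      exists_isCircuit_subset_of_not_indep_inter h.symm (ground_comm M1 M2 p1 p2 p ▸ hX) hX2
    exact ⟨C, hCX, .inr (.inl hC)⟩
  by_cases hpX : p ∈ X
  · by_cases hF1 : M1.Indep (insert p1 (X ∩ M1.E))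
    · have hF2 : ¬ M2.Indep (insert p2 (X ∩ M2.E)) := fun hF2 ↦
        hXi ⟨hX, hX1, hX2, fun _ ↦ ⟨hF1, hF2⟩, fun hp ↦ absurd hpX hp⟩
      obtain ⟨C2, hC2, hp2, hC2X⟩ := hX2.exists_isCircuit_of_not_indep_insert h.symm.mem_left hF2
      exact ⟨_, union_subset (hC2X.trans inter_subset_left) (singleton_subset_iff.2 hpX),
        .inr (.inr (.inr (.inl ⟨C2, hC2, hp2, rfl⟩)))⟩
    · obtain ⟨C1, hC1, hp1, hC1X⟩ := hX1.exists_isCircuit_of_not_indep_insert h.mem_left hF1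
      exact ⟨_, union_subset (hC1X.trans inter_subset_left) (singleton_subset_iff.2 hpX),
        .inr (.inr (.inl ⟨C1, hC1, hp1, rfl⟩))⟩
  · obtain ⟨hF1, hF2⟩ : ¬ M1.Indep (insert p1 (X ∩ M1.E)) ∧ ¬ M2.Indep (insert p2 (X ∩ M2.E)) :=
      not_or.1 fun hF ↦ hXi ⟨hX, hX1, hX2, fun hp ↦ absurd hp hpX, fun _ ↦ hF⟩
    obtain ⟨C1, hC1, hp1, hC1X⟩ := hX1.exists_isCircuit_of_not_indep_insert h.mem_left hF1
    obtain ⟨C2, hC2, hp2, hC2X⟩ := hX2.exists_isCircuit_of_not_indep_insert h.symm.mem_left hF2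
    exact ⟨_, union_subset (hC1X.trans inter_subset_left) (hC2X.trans inter_subset_left),
      .inr (.inr (.inr (.inr ⟨C1, C2, hC1, hp1, hC2, hp2, rfl⟩)))⟩

theorem isCircuit_iff {N : Matroid α} (hNE : N.E = ground M1 M2 p1 p2 p)
    (hNI : ∀ I, N.Indep I ↔ Indep M1 M2 p1 p2 p I) :
    N.IsCircuit C ↔ IsCircuit M1 M2 p1 p2 p C := by
  refine ⟨fun hC ↦ ?_, fun hC ↦ ?_⟩
  · obtain ⟨D, hDC, hD⟩ :=
      exists_isCircuit_subset h (hNE ▸ hC.subset_ground) ((hNI C).not.1 hC.not_indep)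
    rwa [← hC.eq_of_not_indep_subset ((hNI D).not.2 (hD.not_indep h)) hDC]
  · refine Matroid.isCircuit_iff_forall_ssubset.2 ⟨⟨(hNI C).not.2 (hC.not_indep h), ?_⟩,
      fun I hIC ↦ (hNI I).2 (hC.indep_of_ssubset h hIC)⟩
    exact hNE ▸ hC.subset_ground

theorem exists_matroid (h1 : M1.E.Finite) (h2 : M2.E.Finite) :
    ∃ N : Matroid α, N.E = ground M1 M2 p1 p2 p ∧ ∀ I, N.Indep I ↔ Indep M1 M2 p1 p2 p I := by
  have hE : (ground M1 M2 p1 p2 p).Finite := (h1.sdiff.union h2.sdiff).union (finite_singleton p)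
  refine ⟨(IndepMatroid.ofFinite hE (Indep M1 M2 p1 p2 p) (indep_empty h)
    (fun _ _ hJ hIJ ↦ hJ.subset hIJ) (fun I J hI hJ hlt ↦ ?_)
    (fun _ hI ↦ hI.subset_ground)).matroid, rfl, fun _ ↦ Iff.rfl⟩
  have hIfin := hE.subset hI.subset_ground
  have hJfin := hE.subset hJ.subset_ground
  rw [← Nat.cast_lt (α := ℕ∞), hIfin.cast_ncard_eq, hJfin.cast_ncard_eq] at hlt
  obtain ⟨e, ⟨heJ, heI⟩, he⟩ := hI.exists_insert_of_encard_lt h hJ hIfin hlt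
  exact ⟨e, heJ, heI, he⟩

end Circuits

end ParallelConnection

theorem parallelConnection_exists_general {α : Type*} (M1 M2 : Matroid α)
    (h1 : M1.E.Finite) (h2 : M2.E.Finite) (hdisj : Disjoint M1.E M2.E)
    (p1 p2 p : α)
    (hl1 : M1.Indep {p1}) (hl2 : M2.Indep {p2})
    (hp : p ∉ M1.E ∪ M2.E) :
    ∃ N : Matroid α, N.E = (M1.E \ {p1}) ∪ (M2.E \ {p2}) ∪ {p} ∧
      ∀ C : Set α, N.Circuit' C ↔
        ((M1.Circuit' C ∧ p1 ∉ C) ∨ (M2.Circuit' C ∧ p2 ∉ C) ∨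
          (∃ C1 : Set α, M1.Circuit' C1 ∧ p1 ∈ C1 ∧ C = (C1 \ {p1}) ∪ {p}) ∨
          (∃ C2 : Set α, M2.Circuit' C2 ∧ p2 ∈ C2 ∧ C = (C2 \ {p2}) ∪ {p}) ∨
          ∃ C1 C2 : Set α, M1.Circuit' C1 ∧ p1 ∈ C1 ∧ M2.Circuit' C2 ∧ p2 ∈ C2 ∧
            C = (C1 \ {p1}) ∪ (C2 \ {p2})) := by
  have h : ParallelConnection.Admissible M1 M2 p1 p2 p :=
    ⟨hdisj, hl1, hl2, fun hp1 ↦ hp (.inl hp1), fun hp2 ↦ hp (.inr hp2)⟩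
  obtain ⟨N, hNE, hNI⟩ := ParallelConnection.exists_matroid h h1 h2
  refine ⟨N, hNE, fun C ↦ ?_⟩
  simp only [Matroid.circuit'_iff_isCircuit]
  exact ParallelConnection.isCircuit_iff h hNE hNI

/-- The parallel connection: given matroids `M1`, `M2` on disjoint finite ground sets,
non-loop elements `p1 ∈ M1.E`, `p2 ∈ M2.E`, and a fresh element `p`, there is a matroid
on `(M1.E \ {p1}) ∪ (M2.E \ {p2}) ∪ {p}` whose circuits are exactly: the circuits of `M1`
avoiding `p1`, the circuits of `M2` avoiding `p2`, the sets `(C1 \ {p1}) ∪ {p}` for `C1` a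
circuit of `M1` containing `p1`, the sets `(C2 \ {p2}) ∪ {p}` for `C2` a circuit of `M2`
containing `p2`, and the sets `(C1 \ {p1}) ∪ (C2 \ {p2})` for circuits `Ci` of `Mi`
containing `pi`. -/
theorem parallelConnection_exists {α : Type*} (M1 M2 : Matroid α)
    (h1 : M1.E.Finite) (h2 : M2.E.Finite) (hdisj : Disjoint M1.E M2.E)
    (p1 p2 p : α) (hp1 : p1 ∈ M1.E) (hp2 : p2 ∈ M2.E)
    (hl1 : M1.Indep {p1}) (hl2 : M2.Indep {p2})
    (hp : p ∉ M1.E ∪ M2.E) :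
    ∃ N : Matroid α, N.E = (M1.E \ {p1}) ∪ (M2.E \ {p2}) ∪ {p} ∧
      ∀ C : Set α, N.Circuit' C ↔
        ((M1.Circuit' C ∧ p1 ∉ C) ∨ (M2.Circuit' C ∧ p2 ∉ C) ∨
          (∃ C1 : Set α, M1.Circuit' C1 ∧ p1 ∈ C1 ∧ C = (C1 \ {p1}) ∪ {p}) ∨
          (∃ C2 : Set α, M2.Circuit' C2 ∧ p2 ∈ C2 ∧ C = (C2 \ {p2}) ∪ {p}) ∨
          ∃ C1 C2 : Set α, M1.Circuit' C1 ∧ p1 ∈ C1 ∧ M2.Circuit' C2 ∧ p2 ∈ C2 ∧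
            C = (C1 \ {p1}) ∪ (C2 \ {p2})) :=
  parallelConnection_exists_general M1 M2 h1 h2 hdisj p1 p2 p hl1 hl2 hp
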